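/- Let L be a p/q-changemaker lattice with p > q ≥ 2, and suppose σ_i ≥ 1 for all 1 ≤ i ≤ t. If x ∈ L is irreducible and x·e_0 ≠ 0, then |x·f_1| ≤ 1. -/

import Mathlib

/-- The negative continued fraction `[b_0, …, b_n]⁻ = b_0 - 1/[b_1, …, b_n]⁻`. -/
def cfMinus : List ℚ → ℚ
  | [] => 0
  | [b] => b
  | b :: c :: rest => b - 1 / cfMinus (c :: rest)

/-- The standard inner product on `ℤ^ι`. -/
def dot {ι : Type*} [Fintype ι] (x y : ι → ℤ) : ℤ := ∑ i, x i * y i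

/-- The basis vector `f_i` (indices shifted: `fvec t s i` is `f_{i+1}`). -/
def fvec (t s : ℕ) (i : Fin t) : Fin t ⊕ Fin (s + 1) → ℤ := Pi.single (Sum.inl i) 1

/-- The basis vector `e_j`, `0 ≤ j ≤ s`. -/
def evec (t s : ℕ) (j : Fin (s + 1)) : Fin t ⊕ Fin (s + 1) → ℤ := Pi.single (Sum.inr j) 1

/-- The changemaker vector `w_0 = e_0 + σ_1 f_1 + ⋯ + σ_t f_t`. -/
def w0 (t s : ℕ) (σ : Fin t → ℤ) : Fin t ⊕ Fin (s + 1) → ℤ :=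
  Sum.elim σ fun j => if (j : ℕ) = 0 then 1 else 0

/-- The vector `w_k = -e_{m_{k-1}} + e_{m_{k-1}+1} + ⋯ + e_{m_k}` for `k ≥ 1`. -/
def wk (t s : ℕ) (m : ℕ → ℕ) (k : ℕ) : Fin t ⊕ Fin (s + 1) → ℤ :=
  Sum.elim 0 fun j =>
    if (j : ℕ) = m (k - 1) then -1
    else if m (k - 1) < (j : ℕ) ∧ (j : ℕ) ≤ m k then 1 else 0

/-- The vectors `w_0, w_1, …, w_l`. -/
def wvec (t s : ℕ) (σ : Fin t → ℤ) (m : ℕ → ℕ) (k : ℕ) : Fin t ⊕ Fin (s + 1) → ℤ :=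
  if k = 0 then w0 t s σ else wk t s m k

/-- The `p/q`-changemaker lattice `L = ⟨w_0, …, w_l⟩^⊥ ⊆ ℤ^{t+s+1}`. -/
def Lset (t s l : ℕ) (σ : Fin t → ℤ) (m : ℕ → ℕ) : Set (Fin t ⊕ Fin (s + 1) → ℤ) :=
  {x | ∀ k ≤ l, dot x (wvec t s σ m k) = 0}

/-- The fractional part `L_F = ⟨w_1, …, w_l⟩^⊥ ∩ ⟨e_0, …, e_s⟩`. -/
def LFset (t s l : ℕ) (m : ℕ → ℕ) : Set (Fin t ⊕ Fin (s + 1) → ℤ) :=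
  {x | (∀ i, x (Sum.inl i) = 0) ∧ ∀ k, 1 ≤ k → k ≤ l → dot x (wk t s m k) = 0}

/-- The index set `M = {0, 1, …, s} ∖ {m_0, m_1, …, m_l}`. -/
def Mset (s l : ℕ) (m : ℕ → ℕ) : Finset ℕ :=
  (Finset.range (s + 1)).filter fun j => ∀ k ≤ l, j ≠ m k

/-- The least element of `M` (equal to `s` if `M = ∅`). -/
def minM (s l : ℕ) (m : ℕ → ℕ) : ℕ :=
  if h : (Mset s l m).Nonempty then (Mset s l m).min' h else s

/-- For `k ∈ M`, the least element `k'` of `M` greater than `k`; equal to `s`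
if no such element exists. -/
def nxt (s l : ℕ) (m : ℕ → ℕ) (k : ℕ) : ℕ :=
  if h : ((Mset s l m).filter fun j => k < j).Nonempty then
    ((Mset s l m).filter fun j => k < j).min' h
  else s

/-- `v_0 = e_0 + e_1 + ⋯ + e_{min M}` (equal to `e_0 + ⋯ + e_s` if `M = ∅`). -/
def v0vec (t s l : ℕ) (m : ℕ → ℕ) : Fin t ⊕ Fin (s + 1) → ℤ :=
  Sum.elim 0 fun j => if (j : ℕ) ≤ minM s l m then 1 else 0

/-- `v'_k = -e_k + e_{k+1} + ⋯ + e_{k'}` for `k ∈ M`. -/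
def vKvec (t s l : ℕ) (m : ℕ → ℕ) (k : ℕ) : Fin t ⊕ Fin (s + 1) → ℤ :=
  Sum.elim 0 fun j =>
    if (j : ℕ) = k then -1
    else if k < (j : ℕ) ∧ (j : ℕ) ≤ nxt s l m k then 1 else 0

/-- The sequence `v_0, v_1, …, v_m` (`m = |M|`): `v_0` as above, and
`v_1, …, v_m` are the vectors `v'_k`, `k ∈ M`, in increasing order of `k`. -/
def vSeq (t s l : ℕ) (m : ℕ → ℕ) (i : ℕ) : Fin t ⊕ Fin (s + 1) → ℤ :=
  if i = 0 then v0vec t s l m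
  else vKvec t s l m (((Mset s l m).sort (· ≤ ·)).getD (i - 1) 0)

/-- `x_F = Σ_{j=0}^s (x·e_j) e_j`, the projection to the span of the `e_j`. -/
def Fpart (t s : ℕ) (x : Fin t ⊕ Fin (s + 1) → ℤ) : Fin t ⊕ Fin (s + 1) → ℤ :=
  ∑ j, dot x (evec t s j) • evec t s j

/-- `z` is irreducible in the lattice `S`: there are no nonzero `x, y ∈ S`
with `z = x + y` and `x·y ≥ 0`. -/
def IrredIn {ι : Type*} [Fintype ι] (S : Set (ι → ℤ)) (z : ι → ℤ) : Prop :=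
  ¬ ∃ x y : ι → ℤ, x ∈ S ∧ y ∈ S ∧ x ≠ 0 ∧ y ≠ 0 ∧ z = x + y ∧ 0 ≤ dot x y

/-- The data `(t, s, l, a, m, σ)` presents the `p/q`-changemaker lattice
`⟨w_0, …, w_l⟩^⊥ ⊆ ℤ^{t+s+1}`, where `p/q = n − r/q = [a_0, a_1, …, a_l]⁻` with
`a_0 = n`, `a_k ≥ 2` for `1 ≤ k ≤ l`; `m_0 = 0`, `m_k = a_1 + ⋯ + a_k − k`,
`s = m_l`; and `(σ_1, …, σ_t)` is a nondecreasing tuple of nonnegative integers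
satisfying the changemaker condition with `w_0·w_0 = 1 + Σ σ_i² = n`. -/
structure IsCMLattice (p q n r : ℤ) (t s l : ℕ) (a : ℕ → ℤ) (m : ℕ → ℕ)
    (σ : Fin t → ℤ) : Prop where
  hq2 : 2 ≤ q
  hqp : q < p
  hgcd : Int.gcd p q = 1
  hp : p = n * q - r
  hr0 : 0 < r
  hrq : r < q
  ha0 : a 0 = n
  hak : ∀ k, 1 ≤ k → k ≤ l → 2 ≤ a k
  hcf : cfMinus ((List.range (l + 1)).map fun i => (a i : ℚ)) = (p : ℚ) / (q : ℚ)
  hm0 : m 0 = 0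
  hmrec : ∀ k, 1 ≤ k → k ≤ l → (m k : ℤ) = (m (k - 1) : ℤ) + a k - 1
  hs : s = m l
  hσ0 : ∀ i, 0 ≤ σ i
  hσmono : Monotone σ
  hσcm : ∀ i : Fin t, σ i ≤ (∑ j ∈ Finset.univ.filter (· < i), σ j) + 1
  hσn : 1 + ∑ i, σ i ^ 2 = n

/-!
Replacing `x` by `-x`, we may assume `x·f₁ ≥ 2`; we then exhibit `y ∈ L` with `y ≠ 0`,
`x - y ≠ 0` and `y·(x - y) ≥ 0`, checking the sign of `y·(x - y)` coordinatewise.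

The `e`-part of `y` is `r • P`, where `P` is a `0/1` "path": `P₀ = 1`, `P` is orthogonal to
`w₁, …, w_l`, and `P` is supported where `x·e_j` has the sign of `x·e₀`. It is built block by
block: when the path enters the block of `w_{k+1}` at `m_k`, the block equation for `x` shows that
some coordinate of the block has the same sign, and the path continues through it.

If `x·e₀ < 0`, take `y = f₁ - P`. If `x·e₀ > 0`, then `Σ σᵢ (x·fᵢ) = -x·e₀ < 0`, so some
`x·f_j ≤ 0`; take the first such `j`. Every `σ_i` with `i < j` is a coin available `x·fᵢ ≥ 1`
times (`x·f₁ - 1` times for `σ₁ = 1`), and the changemaker condition lets these coins pay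
`σ_j - 1 = Σ τᵢ σᵢ` exactly. Then `y = f₁ - f_j + Σ τᵢ fᵢ`, except that when all `x·f₁ - 1` unit
coins are used, one of them is replaced by the path `P`.
-/

open Finset

theorem exists_sum_mul_eq_of_changemaker {α : Type*} [LinearOrder α] (σ c : α → ℤ)
    (s : Finset α) (hσ : ∀ i ∈ s, 0 < σ i) (hc : ∀ i ∈ s, 0 ≤ c i)
    (hcm : ∀ i ∈ s, σ i ≤ 1 + ∑ k ∈ s with k < i, σ k * c k)
    {u : ℤ} (hu0 : 0 ≤ u) (hu : u ≤ ∑ i ∈ s, σ i * c i) :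
    ∃ τ : α → ℤ, (∀ i ∈ s, 0 ≤ τ i ∧ τ i ≤ c i) ∧ (∀ i ∉ s, τ i = 0) ∧
      ∑ i ∈ s, σ i * τ i = u := by
  classical
  induction s using Finset.induction_on_max generalizing u with
  | empty => exact ⟨0, by simp, by simp, by simp at hu; simp; omega⟩
  | insert a s ha ih =>
    have has : a ∉ s := fun h => lt_irrefl a (ha a h)
    have hσa := hσ a (mem_insert_self a s)
    have hca := hc a (mem_insert_self a s)
    have hfilter : ∀ i ∈ s, (insert a s).filter (· < i) = s.filter (· < i) := fun i hi => by
      rw [filter_insert, if_neg (not_lt.2 (ha i hi).le)]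
    rw [sum_insert has] at hu
    -- greedy step: take as many copies of the largest coin `σ a` as allowed
    set e := min (c a) (u / σ a) with he
    have he0 : 0 ≤ e := le_min hca (Int.ediv_nonneg hu0 hσa.le)
    have hσe : σ a * e ≤ u :=
      (mul_le_mul_of_nonneg_left (min_le_right _ _) hσa.le).trans (Int.mul_ediv_self_le hσa.ne')
    have hrest : u - σ a * e ≤ ∑ i ∈ s, σ i * c i := by
      rcases le_total (c a) (u / σ a) with h | h
      · rw [he, min_eq_left h]; linarith
      · have hlt : u % σ a < σ a := Int.emod_lt_of_pos u hσa
        have hcma := hcm a (mem_insert_self a s)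
        rw [filter_insert, if_neg (lt_irrefl a), filter_true_of_mem ha] at hcma
        rw [he, min_eq_right h, ← Int.emod_def]; linarith
    obtain ⟨τ, hτc, hτs, hτsum⟩ := ih (fun i hi => hσ i (mem_insert_of_mem hi))
      (fun i hi => hc i (mem_insert_of_mem hi))
      (fun i hi => hfilter i hi ▸ hcm i (mem_insert_of_mem hi)) (by linarith) hrest
    refine ⟨Function.update τ a e, ?_, ?_, ?_⟩
    · intro i hi
      rcases eq_or_ne i a with rfl | hia
      · simpa using ⟨he0, min_le_left _ _⟩
      · simpa [hia] using hτc i ((mem_insert.1 hi).resolve_left hia)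
    · intro i hi
      rw [mem_insert, not_or] at hi
      simpa [hi.1] using hτs i hi.2
    · rw [sum_insert has, Function.update_self, sum_congr rfl fun i hi => by
        rw [Function.update_of_ne (ne_of_mem_of_not_mem hi has)], hτsum]
      ring

theorem sum_range_mul_wk_coeff (ξ : ℕ → ℤ) {a b N : ℕ} (ha : a < N) (hb : b < N) :
    ∑ j ∈ range N, ξ j * (if j = a then -1 else if a < j ∧ j ≤ b then 1 else 0) =
      -ξ a + ∑ j ∈ Ioc a b, ξ j := by
  have hIoc : Ioc a b = (range N).filter fun j => a < j ∧ j ≤ b := by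
    ext j; simp only [mem_Ioc, mem_filter, mem_range]; omega
  calc _ = ∑ j ∈ range N, ((if j = a then -ξ a else 0) + if a < j ∧ j ≤ b then ξ j else 0) :=
        sum_congr rfl fun j _ => by split_ifs <;> first | omega | simp_all
    _ = _ := by rw [sum_add_distrib, sum_ite_eq', if_pos (mem_range.2 ha), hIoc, sum_filter]

theorem changemaker_first_le_one {t : ℕ} {σ : Fin t → ℤ} (ht : 0 < t)
    (hσcm : ∀ i : Fin t, σ i ≤ (∑ j ∈ Finset.univ.filter (· < i), σ j) + 1) :
    σ ⟨0, ht⟩ ≤ 1 := by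
  have h0 : univ.filter (· < (⟨0, ht⟩ : Fin t)) = ∅ :=
    filter_false_of_mem fun i _ h => Nat.not_lt_zero _ h
  simpa [h0] using hσcm ⟨0, ht⟩

theorem exists_sum_mul_eq_sub_one_of_changemaker {t : ℕ} {σ : Fin t → ℤ} (hσ1 : ∀ i, 1 ≤ σ i)
    (hσcm : ∀ i : Fin t, σ i ≤ (∑ j ∈ Finset.univ.filter (· < i), σ j) + 1)
    {c : Fin t → ℤ} {j : Fin t} (hc : ∀ i < j, 1 ≤ c i) :
    ∃ τ : Fin t → ℤ, (∀ i < j, 0 ≤ τ i ∧ τ i ≤ c i) ∧ (∀ i, j ≤ i → τ i = 0) ∧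
      ∑ i, τ i * σ i = σ j - 1 := by
  have hσc : ∀ i ≤ j, ∑ k ∈ univ.filter (· < i), σ k ≤ ∑ k ∈ univ.filter (· < i), σ k * c k :=
    fun i hi => sum_le_sum fun k hk => le_mul_of_one_le_right (by linarith [hσ1 k])
      (hc k ((mem_filter.1 hk).2.trans_le hi))
  obtain ⟨τ, hτc, hτs, hτsum⟩ :=
    exists_sum_mul_eq_of_changemaker σ c (univ.filter (· < j)) (u := σ j - 1)
      (fun i _ => by linarith [hσ1 i]) (fun i hi => by linarith [hc i (mem_filter.1 hi).2])
      (fun i hi => by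
        rw [filter_filter, filter_congr fun k _ => and_iff_right_of_imp fun hk =>
          hk.trans (mem_filter.1 hi).2]
        linarith [hσcm i, hσc i (mem_filter.1 hi).2.le])
      (by linarith [hσ1 j]) (by linarith [hσcm j, hσc j le_rfl])
  refine ⟨τ, fun i hi => hτc i (by simpa using hi), fun i hi => hτs i (by simpa using hi), ?_⟩
  rw [← hτsum, ← sum_subset (subset_univ _) fun i _ hi => by simp [hτs i hi]]
  exact sum_congr rfl fun i _ => mul_comm _ _

theorem exists_splitting_fpart {t : ℕ} {σ : Fin t → ℤ} (ht : 0 < t) (hσ1 : ∀ i, 1 ≤ σ i)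
    (hσcm : ∀ i : Fin t, σ i ≤ (∑ j ∈ Finset.univ.filter (· < i), σ j) + 1)
    {v : Fin t → ℤ} (hv0 : 2 ≤ v ⟨0, ht⟩) (hv : ∑ i, v i * σ i < 0) :
    ∃ (β : Fin t → ℤ) (r : ℤ), (r = 0 ∨ r = 1) ∧ ∑ i, β i * σ i + r = 0 ∧
      0 ≤ ∑ i, β i * (v i - β i) ∧ 0 < β ⟨0, ht⟩ ∧ β ⟨0, ht⟩ < v ⟨0, ht⟩ := by
  set i₀ : Fin t := ⟨0, ht⟩
  have hσ₀ : σ i₀ = 1 := le_antisymm (changemaker_first_le_one ht hσcm) (hσ1 i₀)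
  have hneg : ∃ i, v i ≤ 0 := by
    by_contra! h
    exact hv.not_ge (sum_nonneg fun i _ => mul_nonneg (h i).le (by linarith [hσ1 i]))
  obtain ⟨j, hj, hjmin⟩ := WellFounded.has_min wellFounded_lt {i | v i ≤ 0} hneg
  replace hj : v j ≤ 0 := hj
  have hji₀ : j ≠ i₀ := fun h => by rw [h] at hj; omega
  have hi₀j : i₀ < j := Fin.lt_def.2 (Nat.pos_of_ne_zero fun h => hji₀ (Fin.ext h))
  obtain ⟨τ, hτc, hτs, hτσ⟩ := exists_sum_mul_eq_sub_one_of_changemaker hσ1 hσcm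
    (c := v - Pi.single i₀ 1) fun i hi => by
      have : 0 < v i := not_le.1 fun h => hjmin i h hi
      rcases eq_or_ne i i₀ with rfl | h
      · simp; omega
      · simp [h]; omega
  have hτ₀ : 0 ≤ τ i₀ ∧ τ i₀ ≤ v i₀ - 1 := by simpa using hτc i₀ hi₀j
  -- `y·f₁ = 1 + τ i₀` must stay below `v i₀`; otherwise one unit moves to the path (`r = 1`)
  set r : ℤ := if τ i₀ = v i₀ - 1 then 1 else 0 with hr
  have hβ₀ : 0 < τ i₀ + (1 - r) ∧ τ i₀ + (1 - r) < v i₀ := by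
    simp only [hr]; split_ifs <;> omega
  refine ⟨τ + Pi.single i₀ (1 - r) - Pi.single j 1, r, by simp only [hr]; split_ifs <;> simp,
    by simp [add_mul, sub_mul, sum_add_distrib, hτσ, hσ₀, Pi.single_apply, ite_mul], ?_,
    by simpa [hji₀.symm] using hβ₀.1, by simpa [hji₀.symm] using hβ₀.2⟩
  calc (0 : ℤ) = ∑ i, ((if i = i₀ then 1 else 0) - if i = j then 1 else 0) := by simp
    _ ≤ _ := sum_le_sum fun i _ => ?_
  by_cases hi₀ : i = i₀
  · subst hi₀
    simp only [if_pos, if_neg hji₀.symm, Pi.sub_apply, Pi.add_apply, Pi.single_eq_same,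
      Pi.single_eq_of_ne hji₀.symm]
    nlinarith [hβ₀]
  by_cases hij : i = j
  · subst hij
    simp [hi₀, hτs i le_rfl]
    linarith
  simp only [if_neg hi₀, if_neg hij, Pi.sub_apply, Pi.add_apply, Pi.single_eq_of_ne hi₀,
    Pi.single_eq_of_ne hij, sub_zero, add_zero]
  rcases lt_or_ge i j with hlt | hge
  · have := hτc i hlt
    simp only [Pi.sub_apply, Pi.single_eq_of_ne hi₀, sub_zero] at this
    nlinarith
  · simp [hτs i hge]

-- `ξ`, read as the `e`-coordinates of a vector, is orthogonal to `w₁, …, w_l`.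
def BlocksBalanced (l : ℕ) (m : ℕ → ℕ) (ξ : ℕ → ℤ) : Prop :=
  ∀ k < l, ξ (m k) = ∑ j ∈ Ioc (m k) (m (k + 1)), ξ j

theorem blocksBalanced_succ {l : ℕ} {m : ℕ → ℕ} {ξ : ℕ → ℤ} :
    BlocksBalanced (l + 1) m ξ ↔
      BlocksBalanced l m ξ ∧ ξ (m l) = ∑ j ∈ Ioc (m l) (m (l + 1)), ξ j := by
  simp only [BlocksBalanced, Nat.lt_succ_iff_lt_or_eq, or_imp, forall_and, forall_eq]

theorem exists_path_of_blocksBalanced {m : ℕ → ℕ} {ξ : ℕ → ℤ} (hm0 : m 0 = 0) (hξ0 : 1 ≤ ξ 0) :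
    ∀ l, StrictMonoOn m (Set.Iic l) → BlocksBalanced l m ξ →
      ∃ P : ℕ → ℤ, P 0 = 1 ∧ (∀ j, P j = 0 ∨ P j = 1 ∧ 1 ≤ ξ j) ∧ BlocksBalanced l m P ∧
        ∀ j, m l < j → P j = 0 := by
  intro l
  induction l with
  | zero =>
    intro _ _
    refine ⟨Pi.single 0 1, by simp, fun j => ?_, fun k hk => absurd hk k.not_lt_zero,
      fun j hj => ?_⟩
    rcases eq_or_ne j 0 with rfl | hj
    · simpa using hξ0
    · simp [hj]
    · rw [hm0] at hj
      simp [hj.ne']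
  | succ l ih =>
    intro hm hξ
    rw [blocksBalanced_succ] at hξ
    have hml : m l < m (l + 1) := hm (by simp) (by simp) l.lt_succ_self
    obtain ⟨P, hP0, hPξ, hP, hPzero⟩ :=
      ih (hm.mono (Set.Iic_subset_Iic.2 l.le_succ)) hξ.1
    rcases hPξ (m l) with hPl | ⟨hPl, hξl⟩
    · refine ⟨P, hP0, hPξ, blocksBalanced_succ.2 ⟨hP, ?_⟩, fun j hj => hPzero j (hml.trans hj)⟩
      rw [hPl, sum_eq_zero fun j hj => hPzero j (mem_Ioc.1 hj).1]
    · -- the path continues through an index `j₀` of the next block where `ξ` is positive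
      obtain ⟨j₀, hj₀, hξj₀⟩ : ∃ j₀ ∈ Ioc (m l) (m (l + 1)), 1 ≤ ξ j₀ := by
        by_contra! h
        have : ∑ j ∈ Ioc (m l) (m (l + 1)), ξ j ≤ 0 :=
          sum_nonpos fun j hj => Order.le_of_lt_succ (h j hj)
        omega
      obtain ⟨hj₀l, hj₀l'⟩ := mem_Ioc.1 hj₀
      have hupd : ∀ j ≤ m l, Function.update P j₀ 1 j = P j := fun j hj =>
        Function.update_of_ne (by omega) _ _
      refine ⟨Function.update P j₀ 1, by rw [hupd 0 (Nat.zero_le _), hP0], fun j => ?_,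
        blocksBalanced_succ.2 ⟨fun k hk => ?_, ?_⟩, fun j hj => ?_⟩
      · rcases eq_or_ne j j₀ with rfl | hj
        · simpa using hξj₀
        · simpa [hj] using hPξ j
      · have hmk : m (k + 1) ≤ m l := hm.monotoneOn (by simp; omega) (by simp) (by omega)
        have hmk' : m k ≤ m l := (hm.monotoneOn (by simp; omega) (by simp; omega) k.le_succ).trans hmk
        rw [hupd _ hmk', hP k hk]
        exact sum_congr rfl fun j hj => (hupd j ((mem_Ioc.1 hj).2.trans hmk)).symm
      · rw [hupd _ le_rfl, hPl, sum_update_of_mem hj₀, sum_eq_zero fun j hj =>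
          hPzero j (mem_Ioc.1 (mem_sdiff.1 hj).1).1, add_zero]
      · rw [Function.update_of_ne (by omega)]
        exact hPzero j (by omega)

theorem dot_single_one {ι : Type*} [Fintype ι] [DecidableEq ι] (x : ι → ℤ) (i : ι) :
    dot x (Pi.single i 1) = x i :=
  (dotProduct_single (v := x) 1 i).trans (mul_one _)

theorem not_irredIn_of_dot_sub_nonneg {ι : Type*} [Fintype ι] {S : Set (ι → ℤ)}
    (hS : ∀ x ∈ S, ∀ y ∈ S, x - y ∈ S) {x y : ι → ℤ} (hx : x ∈ S) (hy : y ∈ S) (hy0 : y ≠ 0)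
    (hxy : x - y ≠ 0) (h : 0 ≤ dot y (x - y)) : ¬ IrredIn S x :=
  fun hirr => hirr ⟨y, x - y, hy, hS x hx y hy, hy0, hxy, (add_sub_cancel y x).symm, h⟩

theorem IrredIn.neg {ι : Type*} [Fintype ι] {S : Set (ι → ℤ)} (hS : ∀ x ∈ S, -x ∈ S)
    {x : ι → ℤ} (h : IrredIn S x) : IrredIn S (-x) := by
  rintro ⟨a, b, ha, hb, ha0, hb0, hab, hdot⟩
  refine h ⟨-a, -b, hS a ha, hS b hb, neg_ne_zero.2 ha0, neg_ne_zero.2 hb0, ?_, ?_⟩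
  · rw [← neg_add, ← hab, neg_neg]
  · simpa [dot] using hdot

-- the coordinate `x·e_j`, with junk value `0` for `j > s`
def ecoord {t s : ℕ} (x : Fin t ⊕ Fin (s + 1) → ℤ) (j : ℕ) : ℤ :=
  if h : j < s + 1 then x (Sum.inr ⟨j, h⟩) else 0

section Lattice

variable {t s l : ℕ} {σ : Fin t → ℤ} {m : ℕ → ℕ}

theorem sub_mem_Lset {x y : Fin t ⊕ Fin (s + 1) → ℤ} (hx : x ∈ Lset t s l σ m)
    (hy : y ∈ Lset t s l σ m) : x - y ∈ Lset t s l σ m := fun k hk => by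
  simpa only [dot, Pi.sub_apply, sub_mul, sum_sub_distrib, sub_eq_zero] using
    (hx k hk).trans (hy k hk).symm

theorem neg_mem_Lset {x : Fin t ⊕ Fin (s + 1) → ℤ} (hx : x ∈ Lset t s l σ m) :
    -x ∈ Lset t s l σ m := by
  simpa using sub_mem_Lset (x := 0) (fun k _ => by simp [dot]) hx

theorem sum_inr_mul_eq_sum_range (x : Fin t ⊕ Fin (s + 1) → ℤ) (g : ℕ → ℤ) :
    ∑ j : Fin (s + 1), x (Sum.inr j) * g j = ∑ j ∈ range (s + 1), ecoord x j * g j := by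
  rw [← Fin.sum_univ_eq_sum_range fun j => ecoord x j * g j]
  exact sum_congr rfl fun j _ => by simp [ecoord, j.is_lt]

theorem dot_w0 (x : Fin t ⊕ Fin (s + 1) → ℤ) :
    dot x (w0 t s σ) = ∑ i, x (Sum.inl i) * σ i + x (Sum.inr 0) := by
  simp only [dot, w0, Fintype.sum_sum_type, Sum.elim_inl, Sum.elim_inr]
  rw [sum_inr_mul_eq_sum_range x fun j => if j = 0 then 1 else 0]
  simp [ecoord]

theorem dot_wk_succ (x : Fin t ⊕ Fin (s + 1) → ℤ) {k : ℕ} (hk : m k ≤ s) (hk' : m (k + 1) ≤ s) :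
    dot x (wk t s m (k + 1)) = -ecoord x (m k) + ∑ j ∈ Ioc (m k) (m (k + 1)), ecoord x j := by
  simp only [dot, wk, Fintype.sum_sum_type, Sum.elim_inl, Pi.zero_apply, mul_zero, sum_const_zero,
    zero_add, Sum.elim_inr, Nat.add_sub_cancel]
  rw [sum_inr_mul_eq_sum_range x fun j => if j = m k then -1 else if m k < j ∧ j ≤ m (k + 1)
    then 1 else 0, sum_range_mul_wk_coeff _ (by omega) (by omega)]

theorem mem_Lset_iff (hm : StrictMonoOn m (Set.Iic l)) (hs : s = m l)
    (x : Fin t ⊕ Fin (s + 1) → ℤ) :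
    x ∈ Lset t s l σ m ↔
      ∑ i, x (Sum.inl i) * σ i + x (Sum.inr 0) = 0 ∧ BlocksBalanced l m (ecoord x) := by
  have hms : ∀ k ≤ l, m k ≤ s := fun k hk => hs ▸ hm.monotoneOn hk Set.self_mem_Iic hk
  have hwk : ∀ k < l, dot x (wk t s m (k + 1)) = 0 ↔
      ecoord x (m k) = ∑ j ∈ Ioc (m k) (m (k + 1)), ecoord x j := fun k hk => by
    rw [dot_wk_succ x (hms k hk.le) (hms (k + 1) hk)]; omega
  constructor
  · intro hx
    refine ⟨by simpa [wvec, dot_w0] using hx 0 (Nat.zero_le l), fun k hk => ?_⟩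
    exact (hwk k hk).1 (by simpa [wvec] using hx (k + 1) hk)
  · rintro ⟨h0, hbal⟩ k hk
    cases k with
    | zero => simpa [wvec, dot_w0] using h0
    | succ k => simpa [wvec] using (hwk k hk).2 (hbal k hk)

theorem not_irredIn_Lset_of_split (hm : StrictMonoOn m (Set.Iic l)) (hs : s = m l)
    {x : Fin t ⊕ Fin (s + 1) → ℤ} (hx : x ∈ Lset t s l σ m) (β : Fin t → ℤ) (r : ℤ)
    {P : ℕ → ℤ} (hP0 : P 0 = 1) (hP : BlocksBalanced l m P)
    (hPx : ∀ j, 0 ≤ r * P j * (ecoord x j - r * P j)) (hβσ : ∑ i, β i * σ i + r = 0)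
    (hgain : 0 ≤ ∑ i, β i * (x (Sum.inl i) - β i)) {i : Fin t} (hβi : β i ≠ 0)
    (hβx : β i ≠ x (Sum.inl i)) : ¬ IrredIn (Lset t s l σ m) x := by
  set y : Fin t ⊕ Fin (s + 1) → ℤ := Sum.elim β fun j => r * P j
  have hye : ∀ j ≤ m l, ecoord y j = r * P j := fun j hj => by
    simp [ecoord, y, show j < s + 1 by omega]
  have hyL : y ∈ Lset t s l σ m := by
    refine (mem_Lset_iff hm hs y).2 ⟨by simpa [y, hP0] using hβσ, fun k hk => ?_⟩
    have hmk : m (k + 1) ≤ m l := hm.monotoneOn (by simp; omega) Set.self_mem_Iic (by omega)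
    rw [hye _ ((hm.monotoneOn (by simp; omega) (by simp; omega) k.le_succ).trans hmk),
      sum_congr rfl fun j hj => hye j ((mem_Ioc.1 hj).2.trans hmk), ← mul_sum, ← hP k hk]
  refine not_irredIn_of_dot_sub_nonneg (fun _ h₁ _ h₂ => sub_mem_Lset h₁ h₂) hx hyL
    (fun h => hβi (congrFun h (Sum.inl i))) (fun h => hβx ?_) ?_
  · linarith [show x (Sum.inl i) - β i = 0 from congrFun h (Sum.inl i)]
  · simp only [dot, Fintype.sum_sum_type, y, Pi.sub_apply, Sum.elim_inl, Sum.elim_inr]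
    exact add_nonneg hgain (sum_nonneg fun j _ => by simpa [ecoord, j.is_lt] using hPx j)

theorem not_irredIn_Lset_of_two_le (ht : 0 < t) (hσ1 : ∀ i, 1 ≤ σ i)
    (hσcm : ∀ i : Fin t, σ i ≤ (∑ j ∈ Finset.univ.filter (· < i), σ j) + 1)
    (hm0 : m 0 = 0) (hm : StrictMonoOn m (Set.Iic l)) (hs : s = m l)
    {x : Fin t ⊕ Fin (s + 1) → ℤ} (hx : x ∈ Lset t s l σ m) (hF : 2 ≤ x (Sum.inl ⟨0, ht⟩))
    (he0 : x (Sum.inr 0) ≠ 0) : ¬ IrredIn (Lset t s l σ m) x := by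
  obtain ⟨hw0, hbal⟩ := (mem_Lset_iff hm hs x).1 hx
  have hξ0 : ecoord x 0 = x (Sum.inr 0) := by simp [ecoord]
  rcases he0.lt_or_gt with hneg | hpos
  · obtain ⟨P, hP0, hPξ, hP, -⟩ := exists_path_of_blocksBalanced (ξ := -ecoord x) hm0
      (by show 1 ≤ -ecoord x 0; omega) l hm fun k hk => by simp [hbal k hk]
    have hσ₀ : σ ⟨0, ht⟩ = 1 := le_antisymm (changemaker_first_le_one ht hσcm) (hσ1 _)
    refine not_irredIn_Lset_of_split hm hs hx (Pi.single ⟨0, ht⟩ 1) (-1) hP0 hP (fun j => ?_)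
      (by simp [Pi.single_apply, ite_mul, hσ₀]) ?_ (i := ⟨0, ht⟩) (by simp) (by simp; omega)
    · rcases hPξ j with h | ⟨h, h'⟩
      · simp [h]
      · simp only [h]
        linarith [show 1 ≤ -ecoord x j from h']
    · rw [sum_eq_single (⟨0, ht⟩ : Fin t) (fun i _ hi => by simp [hi]) (by simp)]
      simp; omega
  · obtain ⟨P, hP0, hPξ, hP, -⟩ := exists_path_of_blocksBalanced hm0 (by omega) l hm hbal
    obtain ⟨β, r, hr, hβσ, hgain, hβ₀, hβ₀'⟩ :=
      exists_splitting_fpart ht hσ1 hσcm hF (by linarith)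
    refine not_irredIn_Lset_of_split hm hs hx β r hP0 hP (fun j => ?_) hβσ hgain hβ₀.ne'
      hβ₀'.ne
    rcases hPξ j with h | ⟨h, h'⟩
    · simp [h]
    · rcases hr with rfl | rfl
      · simp
      · simp only [h]; linarith

end Lattice

/-- Part of Lemma 6.9 of the paper: if `σ_i ≥ 1` for all `i`, and `x ∈ L` is
irreducible with `x·e_0 ≠ 0`, then `|x·f_1| ≤ 1`. -/
theorem stmt_12 (p q n r : ℤ) (t s l : ℕ) (a : ℕ → ℤ) (m : ℕ → ℕ) (σ : Fin t → ℤ)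
    (h : IsCMLattice p q n r t s l a m σ) (hσ1 : ∀ i, 1 ≤ σ i) (ht : 0 < t)
    (x : Fin t ⊕ Fin (s + 1) → ℤ) (hx : x ∈ Lset t s l σ m)
    (hirr : IrredIn (Lset t s l σ m) x)
    (he0 : dot x (evec t s 0) ≠ 0) :
    |dot x (fvec t s ⟨0, ht⟩)| ≤ 1 := by
  have hm : StrictMonoOn m (Set.Iic l) := strictMonoOn_Iic_of_lt_succ fun k hk => by
    have hrec := h.hmrec (k + 1) (by omega) (Order.add_one_le_of_lt hk)
    have hak := h.hak (k + 1) (by omega) (Order.add_one_le_of_lt hk)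
    rw [Nat.add_sub_cancel] at hrec
    rw [Order.succ_eq_add_one]
    omega
  have he : x (Sum.inr 0) ≠ 0 := by rwa [evec, dot_single_one] at he0
  have hreduce := @not_irredIn_Lset_of_two_le t s l σ m ht hσ1 h.hσcm h.hm0 hm h.hs
  rw [fvec, dot_single_one]
  by_contra! hlt
  rcases lt_abs.1 hlt with hF | hF
  · exact hreduce hx (by omega) he hirr
  · exact hreduce (neg_mem_Lset hx) (by simp only [Pi.neg_apply]; omega) (by simpa using he)
      (hirr.neg fun _ => neg_mem_Lset)
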